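/- (Theorem 1, part IV.) Let f : (Fin n → Bool) → ℂ², let k be an index, let α₁, γ ∈ ℝ, define g(U) = true iff f_{v_k}(U) = R_x(α₁)·f_{v̄_k}(U), g₁(U) := (U k) XOR g(U), and h(U) := cop(g₁(U), −γ, f(U)). If an index i ≠ k is r-linear for f with angle θ_i, then i is r-linear for h with the same angle θ_i: for every assignment U, h_{v_i}(U) = R_x(θ_i)·h_{v̄_i}(U). -/

import Mathlib

open Matrix Function

/-- The rotation around the x axis: rows (cos(θ/2), −i·sin(θ/2)), (−i·sin(θ/2), cos(θ/2)). -/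
noncomputable def Rx (θ : ℝ) : Matrix (Fin 2) (Fin 2) ℂ :=
  !![(Real.cos (θ / 2) : ℂ), -Complex.I * Real.sin (θ / 2);
     -Complex.I * Real.sin (θ / 2), (Real.cos (θ / 2) : ℂ)]

/-- The basis state 0̂ = (1, 0). -/
def ket0 : Fin 2 → ℂ := ![1, 0]

/-- The basis state 1̂ = (0, −i). -/
def ket1 : Fin 2 → ℂ := ![0, -Complex.I]

/-- Embedding of a Boolean into the basis {0̂, 1̂}. -/
def emb (b : Bool) : Fin 2 → ℂ := if b then ket1 else ket0

/-- Controlled rotation: `cop a θ v = Rx θ · v` if `a` is true, else `v`. -/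
noncomputable def cop (a : Bool) (θ : ℝ) (v : Fin 2 → ℂ) : Fin 2 → ℂ :=
  if a then (Rx θ).mulVec v else v

/-! The rotations `Rx θ` commute with each other and are invertible. Since `i ≠ k`, the
test defining `g` reads as the same equation, rotated by `Rx θ` on both sides, whether
`x_i` is true or false; so `g`, and with it the control bit `g₁`, ignores `x_i`. A controlled
rotation with such a control commutes with `Rx θ`, which carries r-linearity from `f` to `h`. -/

lemma Rx_mul (a b : ℝ) : Rx a * Rx b = Rx (a + b) := by
  ext i j
  fin_cases i <;> fin_cases j <;>
    simp [Rx, Matrix.mul_apply, Fin.sum_univ_two, add_div, Real.cos_add, Real.sin_add] <;>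
    (ring_nf; try simp [Complex.I_sq]; try ring)

lemma Rx_zero : Rx 0 = 1 := by
  ext i j
  fin_cases i <;> fin_cases j <;> simp [Rx]

lemma Rx_mulVec_injective (a : ℝ) : Injective (Rx a *ᵥ ·) := by
  intro u v huv
  have h := congrArg (Rx (-a) *ᵥ ·) huv
  simpa only [mulVec_mulVec, Rx_mul, neg_add_cancel, Rx_zero, one_mulVec] using h

lemma Rx_mulVec_comm (a b : ℝ) (v : Fin 2 → ℂ) : Rx a *ᵥ Rx b *ᵥ v = Rx b *ᵥ Rx a *ᵥ v := by
  rw [mulVec_mulVec, mulVec_mulVec, Rx_mul, Rx_mul, add_comm]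

lemma cop_Rx_mulVec (a : Bool) (φ θ : ℝ) (v : Fin 2 → ℂ) :
    cop a φ (Rx θ *ᵥ v) = Rx θ *ᵥ cop a φ v := by
  cases a
  · rfl
  · exact Rx_mulVec_comm φ θ v

def IsRLinear {n : ℕ} (f : (Fin n → Bool) → Fin 2 → ℂ) (i : Fin n) (θ : ℝ) : Prop :=
  ∀ U, f (update U i true) = Rx θ *ᵥ f (update U i false)

namespace IsRLinear

variable {n : ℕ} {f : (Fin n → Bool) → Fin 2 → ℂ} {i : Fin n} {θ : ℝ}

lemma rLinear_at_update_iff (hf : IsRLinear f i θ) {k : Fin n} (hik : i ≠ k) (α : ℝ)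
    (U : Fin n → Bool) :
    f (update (update U i true) k true) = Rx α *ᵥ f (update (update U i true) k false) ↔
      f (update (update U i false) k true) = Rx α *ᵥ f (update (update U i false) k false) := by
  rw [update_comm hik, update_comm hik, update_comm hik, update_comm hik, hf, hf,
    Rx_mulVec_comm α θ]
  exact (Rx_mulVec_injective θ).eq_iff

lemma cop (hf : IsRLinear f i θ) {c : (Fin n → Bool) → Bool}
    (hc : ∀ U, c (update U i true) = c (update U i false)) (φ : ℝ) :
    IsRLinear (fun U => _root_.cop (c U) φ (f U)) i θ := by
  intro U
  simp only [hc U, hf U, cop_Rx_mulVec]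

end IsRLinear

theorem stmt_10 (n : ℕ) (f : (Fin n → Bool) → (Fin 2 → ℂ)) (k : Fin n) (α₁ γ : ℝ)
    (g g₁ : (Fin n → Bool) → Bool) (h : (Fin n → Bool) → (Fin 2 → ℂ))
    (hg : ∀ U, g U = true ↔
      f (Function.update U k true) = (Rx α₁).mulVec (f (Function.update U k false)))
    (hg₁ : ∀ U, g₁ U = xor (U k) (g U))
    (hh : ∀ U, h U = cop (g₁ U) (-γ) (f U))
    (i : Fin n) (hik : i ≠ k) (θ : ℝ)
    (hlin : ∀ U : Fin n → Bool,
      f (Function.update U i true) = (Rx θ).mulVec (f (Function.update U i false))) :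
    ∀ U : Fin n → Bool,
      h (Function.update U i true) = (Rx θ).mulVec (h (Function.update U i false)) := by
  have hf : IsRLinear f i θ := hlin
  have hg_indep (U : Fin n → Bool) : g (update U i true) = g (update U i false) :=
    Bool.eq_iff_iff.2 <| (hg _).trans <| (hf.rLinear_at_update_iff hik α₁ U).trans (hg _).symm
  have hg₁_indep (U : Fin n → Bool) : g₁ (update U i true) = g₁ (update U i false) := by
    rw [hg₁, hg₁, hg_indep, update_of_ne hik.symm, update_of_ne hik.symm]
  obtain rfl : h = fun U => cop (g₁ U) (-γ) (f U) := funext hh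
  exact hf.cop hg₁_indep (-γ)
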